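/- If v and w are distinct 0-1 words of length n, then the freedom matroids M_v and M_w are not isomorphic; consequently, there are exactly 2^n pairwise nonisomorphic freedom matroids on an n-element set. -/

import Mathlib

/-!
The freedom matroid `M_w` is recovered from its isomorphism type: for every `k`, the flag set
`T_k` is a largest set of rank at most `k`. Indeed `T_k` has rank at most `k` by the constraint
`|I ∩ T_k| ≤ k`, while any set with more than `|T_k|` elements contains an independent set of
size `k + 1`, built by repeatedly adding an element outside the current flag set. So the numbers
`|T_k|`, which are the positions of the ones of `w` (and `n` beyond them), are isomorphism
invariants, and they determine `w`.
-/

open Matroid Set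

/-- The set of positions of the ones of a 0-1 word of length `n`. -/
def ones {n : ℕ} (v : Fin n → Bool) : Finset (Fin n) :=
  Finset.univ.filter (fun i => v i = true)

/-- The flag on `Fin n` determined by a word `w` with `r` ones: `T_r` is everything,
and `T_{k-1} = { s : s < e_{π_k(w)} }` for `1 ≤ k ≤ r`. -/
def flagOfWord {n : ℕ} (w : Fin n → Bool) (i : ℕ) : Set (Fin n) :=
  if h : i < (ones w).card
    then {s : Fin n | s < (ones w).orderEmbOfFin rfl ⟨i, h⟩} else Set.univ

section Flag

variable {n : ℕ} {w : Fin n → Bool} {k : ℕ}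

lemma flagOfWord_of_lt (hk : k < (ones w).card) :
    flagOfWord w k = Iio ((ones w).orderEmbOfFin rfl ⟨k, hk⟩) := by
  simp [flagOfWord, hk, Iio]

lemma flagOfWord_of_le (hk : (ones w).card ≤ k) : flagOfWord w k = univ := by
  simp [flagOfWord, hk.not_gt]

lemma ncard_flagOfWord_of_lt (hk : k < (ones w).card) :
    (flagOfWord w k).ncard = (ones w).orderEmbOfFin rfl ⟨k, hk⟩ := by
  rw [flagOfWord_of_lt hk, ← Finset.coe_Iio, ncard_coe_finset, Fin.card_Iio]

lemma ncard_flagOfWord_of_le (hk : (ones w).card ≤ k) : (flagOfWord w k).ncard = n := by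
  simp [flagOfWord_of_le hk]

lemma flagOfWord_mono (w : Fin n → Bool) : Monotone (flagOfWord w) := by
  intro i j hij
  by_cases hj : j < (ones w).card
  · rw [flagOfWord_of_lt (hij.trans_lt hj), flagOfWord_of_lt hj]
    exact Iio_subset_Iio (((ones w).orderEmbOfFin rfl).monotone (Fin.mk_le_mk.mpr hij))
  · rw [flagOfWord_of_le (not_lt.mp hj)]
    exact subset_univ _

lemma ncard_flagOfWord_lt_succ (hk : k + 1 < (ones w).card) :
    (flagOfWord w k).ncard < (flagOfWord w (k + 1)).ncard := by
  rw [ncard_flagOfWord_of_lt (by omega), ncard_flagOfWord_of_lt hk]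
  exact ((ones w).orderEmbOfFin rfl).strictMono (Fin.mk_lt_mk.mpr k.lt_succ_self)

lemma mem_ones_iff_exists_ncard_flagOfWord (c : Fin n) :
    c ∈ ones w ↔ ∃ k, (flagOfWord w k).ncard = c := by
  constructor
  · intro hc
    rw [← Finset.mem_coe, ← Finset.range_orderEmbOfFin (ones w) rfl] at hc
    obtain ⟨⟨k, hk⟩, rfl⟩ := hc
    exact ⟨k, ncard_flagOfWord_of_lt hk⟩
  · rintro ⟨k, hkc⟩
    by_cases hk : k < (ones w).card
    · rw [ncard_flagOfWord_of_lt hk] at hkc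
      rw [← Fin.ext hkc]
      exact Finset.orderEmbOfFin_mem _ _ _
    · rw [ncard_flagOfWord_of_le (not_lt.mp hk)] at hkc
      exact absurd hkc.symm c.is_lt.ne

lemma eq_of_forall_ncard_flagOfWord_eq {v : Fin n → Bool}
    (h : ∀ k, (flagOfWord v k).ncard = (flagOfWord w k).ncard) : v = w := by
  funext i
  have hmem := mem_ones_iff_exists_ncard_flagOfWord (w := v) i
  simp only [h, ← mem_ones_iff_exists_ncard_flagOfWord, ones, Finset.mem_filter,
    Finset.mem_univ, true_and] at hmem
  exact Bool.eq_iff_iff.mpr hmem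

end Flag

/-- `X` has rank at most `k`. -/
def IndepBounded {α : Type*} (M : Matroid α) (k : ℕ) (X : Set α) : Prop :=
  ∀ I ⊆ X, M.Indep I → I.ncard ≤ k

section Iso

variable {α β : Type*} {M : Matroid α} {N : Matroid β} {e : α ≃ β}

lemma indepBounded_image_iff (he : ∀ I, M.Indep I ↔ N.Indep (e '' I)) {k : ℕ} {X : Set α} :
    IndepBounded N k (e '' X) ↔ IndepBounded M k X := by
  constructor
  · intro hX I hIX hI
    rw [← ncard_image_of_injective I e.injective]
    exact hX _ (image_mono hIX) ((he I).mp hI)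
  · intro hX J hJX hJ
    obtain ⟨I, hIX, rfl⟩ := subset_image_iff.mp hJX
    rw [ncard_image_of_injective I e.injective]
    exact hX I hIX ((he I).mpr hJ)

lemma ncard_image_setOf_indepBounded_eq (he : ∀ I, M.Indep I ↔ N.Indep (e '' I)) (k : ℕ) :
    ncard '' {Y | IndepBounded N k Y} = ncard '' {X | IndepBounded M k X} := by
  ext m
  constructor
  · rintro ⟨Y, hY, rfl⟩
    refine ⟨e.symm '' Y, ?_, ncard_image_of_injective Y e.symm.injective⟩
    rwa [mem_ofPred_eq, ← indepBounded_image_iff he, e.image_symm_image]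
  · rintro ⟨X, hX, rfl⟩
    exact ⟨e '' X, (indepBounded_image_iff he).mpr hX, ncard_image_of_injective X e.injective⟩

end Iso

def IsFreedomMatroid {n : ℕ} (w : Fin n → Bool) (M : Matroid (Fin n)) : Prop :=
  ∀ I, M.Indep I ↔ ∀ i ≤ (ones w).card, (I ∩ flagOfWord w i).ncard ≤ i

namespace IsFreedomMatroid

variable {n : ℕ} {w : Fin n → Bool} {M : Matroid (Fin n)}

lemma indep_insert (hM : IsFreedomMatroid w M) {I : Set (Fin n)} {x : Fin n} {k : ℕ}
    (hI : M.Indep I) (hIk : I.ncard ≤ k) (hx : x ∉ flagOfWord w k) :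
    M.Indep (insert x I) := by
  rw [hM] at hI ⊢
  intro i hi
  by_cases hik : i ≤ k
  · rw [insert_inter_of_notMem fun hxi => hx (flagOfWord_mono w hik hxi)]
    exact hI i hi
  · calc (insert x I ∩ flagOfWord w i).ncard ≤ (insert x I).ncard := ncard_inter_le_ncard_left _ _
      _ ≤ I.ncard + 1 := ncard_insert_le x I
      _ ≤ i := by omega

lemma exists_indep_subset_of_ncard_flagOfWord_lt (hM : IsFreedomMatroid w M) {k : ℕ}
    (hk : k < (ones w).card) {X : Set (Fin n)} (hX : (flagOfWord w k).ncard < X.ncard) :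
    ∃ I ⊆ X, I.ncard = k + 1 ∧ M.Indep I := by
  obtain ⟨x, hxX, hx⟩ := not_subset.mp fun hXT => (ncard_le_ncard hXT).not_gt hX
  induction k generalizing X x with
  | zero =>
    exact ⟨{x}, singleton_subset_iff.mpr hxX, ncard_singleton x,
      by simpa using hM.indep_insert M.empty_indep (by simp) hx⟩
  | succ k ih =>
    have hX' : (flagOfWord w k).ncard < (X \ {x}).ncard := by
      rw [ncard_sdiff_singleton_of_mem hxX]
      have := ncard_flagOfWord_lt_succ hk
      omega
    obtain ⟨y, hyX, hy⟩ := not_subset.mp fun hXT => (ncard_le_ncard hXT).not_gt hX'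
    obtain ⟨I, hIX, hIcard, hI⟩ := ih (by omega) hX' y hyX hy
    have hxI : x ∉ I := fun hxI => (hIX hxI).2 rfl
    refine ⟨insert x I, insert_subset hxX (hIX.trans sdiff_subset), ?_,
      hM.indep_insert hI hIcard.le hx⟩
    rw [ncard_insert_of_notMem hxI, hIcard]

lemma isGreatest_ncard_flagOfWord (hM : IsFreedomMatroid w M) (k : ℕ) :
    IsGreatest (ncard '' {X | IndepBounded M k X}) (flagOfWord w k).ncard := by
  refine ⟨⟨flagOfWord w k, fun I hIT hI => ?_, rfl⟩, ?_⟩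
  · by_cases hk : k ≤ (ones w).card
    · simpa [inter_eq_self_of_subset_left hIT] using (hM I).mp hI k hk
    · have := (hM I).mp hI _ le_rfl
      rw [flagOfWord_of_le le_rfl, inter_univ] at this
      omega
  · rintro _ ⟨X, hX, rfl⟩
    by_cases hk : k < (ones w).card
    · by_contra! hlt
      obtain ⟨I, hIX, hIcard, hI⟩ := hM.exists_indep_subset_of_ncard_flagOfWord_lt hk hlt
      have := hX I hIX hI
      omega
    · rw [flagOfWord_of_le (not_lt.mp hk)]
      exact ncard_le_ncard (subset_univ X)

end IsFreedomMatroid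

theorem freedom_matroids_pairwise_nonisomorphic_general {n : ℕ}
    (Mfam : (Fin n → Bool) → Matroid (Fin n))
    (hInd : ∀ w, ∀ I : Set (Fin n),
      (Mfam w).Indep I ↔ ∀ i ≤ (ones w).card, (I ∩ flagOfWord w i).ncard ≤ i) :
    (∀ v w : Fin n → Bool, v ≠ w →
      ¬ ∃ f : Equiv.Perm (Fin n),
        ∀ I : Set (Fin n), (Mfam v).Indep I ↔ (Mfam w).Indep (⇑f '' I)) ∧
    Fintype.card (Fin n → Bool) = 2 ^ n := by
  refine ⟨fun v w hvw ⟨f, hf⟩ => hvw (eq_of_forall_ncard_flagOfWord_eq fun k => ?_), by simp⟩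
  have hw := IsFreedomMatroid.isGreatest_ncard_flagOfWord (hInd w) k
  rw [ncard_image_setOf_indepBounded_eq hf] at hw
  exact (IsFreedomMatroid.isGreatest_ncard_flagOfWord (hInd v) k).unique hw

/-- If `v` and `w` are distinct 0-1 words of length `n`, then the freedom
matroids `M_v` and `M_w` are not isomorphic; consequently there are exactly `2^n`
pairwise nonisomorphic freedom matroids on an `n`-element set, one for each of the
`2^n` words.  Here `Mfam w` denotes the freedom matroid `M_w` on `Fin n`, and an
isomorphism is a permutation of the ground set carrying independent sets to
independent sets. -/
theorem freedom_matroids_pairwise_nonisomorphic {n : ℕ}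
    (Mfam : (Fin n → Bool) → Matroid (Fin n))
    (hE : ∀ w, (Mfam w).E = Set.univ)
    (hInd : ∀ w, ∀ I : Set (Fin n),
      (Mfam w).Indep I ↔ ∀ i ≤ (ones w).card, (I ∩ flagOfWord w i).ncard ≤ i) :
    (∀ v w : Fin n → Bool, v ≠ w →
      ¬ ∃ f : Equiv.Perm (Fin n),
        ∀ I : Set (Fin n), (Mfam v).Indep I ↔ (Mfam w).Indep (⇑f '' I)) ∧
    Fintype.card (Fin n → Bool) = 2 ^ n :=
  freedom_matroids_pairwise_nonisomorphic_general Mfam hInd
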